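/- Let d = 2 and assume φ'(1) > 0. Let q ∈ ℝ^m have positive integer entries, set n = q_1 + ⋯ + q_m, and given X = (x_1,…,x_m) ∈ ℝ^{2×m} with unit-norm columns, let X̃ ∈ ℝ^{2×n} be the matrix whose columns repeat x_i exactly q_i times, for i = 1,…,m. If X is critical for f_m(X) = (1/2)⟨qqᵀ, φ(XᵀX)⟩ and the Laplacian L(M) with m_ij = q_i q_j h(x_iᵀx_j) is positive semidefinite with kernel exactly span(1_m), then X̃ is critical for f_n(X̃) = (1/2)⟨1_n 1_nᵀ, φ(X̃ᵀX̃)⟩ and the Laplacian L(M̃) with m̃_kl = h(x̃_kᵀx̃_l) is positive semidefinite with kernel exactly span(1_n). Here h(t) = tφ'(t) − (1−t²)φ''(t). -/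

import Mathlib

open Matrix

noncomputable section

/-- Frobenius inner product `⟨A,B⟩ = ∑ᵢⱼ Aᵢⱼ Bᵢⱼ`. -/
def frob {ι κ : Type*} [Fintype ι] [Fintype κ] (A B : Matrix ι κ ℝ) : ℝ :=
  ∑ i, ∑ j, A i j * B i j

/-- `ddiag` zeroes out all off-diagonal entries of a square matrix. -/
def ddiag {ι : Type*} [Fintype ι] [DecidableEq ι] (M : Matrix ι ι ℝ) : Matrix ι ι ℝ :=
  Matrix.diagonal fun i => M i i

/-- Graph Laplacian `L(M) = diag(M 1) − M`. -/
def lap {ι : Type*} [Fintype ι] [DecidableEq ι] (M : Matrix ι ι ℝ) : Matrix ι ι ℝ :=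
  Matrix.diagonal (fun i => ∑ j, M i j) - M

/-- `X` has unit-norm columns. -/
def unitCols {d : ℕ} {ι : Type*} [Fintype ι] (X : Matrix (Fin d) ι ℝ) : Prop :=
  ∀ j, ∑ i, X i j ^ 2 = 1

/-- `A = W ⊙ φ'(XᵀX)` (`d1` playing the role of `φ'`). -/
def Amat {d : ℕ} {ι : Type*} [Fintype ι] (W : Matrix ι ι ℝ) (X : Matrix (Fin d) ι ℝ)
    (d1 : ℝ → ℝ) : Matrix ι ι ℝ :=
  Matrix.hadamard W ((Xᵀ * X).map d1)

/-- `S = ddiag(XᵀXA) − A`. -/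
def Smat {d : ℕ} {ι : Type*} [Fintype ι] [DecidableEq ι] (W : Matrix ι ι ℝ)
    (X : Matrix (Fin d) ι ℝ) (d1 : ℝ → ℝ) : Matrix ι ι ℝ :=
  ddiag ((Xᵀ * X) * Amat W X d1) - Amat W X d1

/-- First-order criticality: `X S = 0`, i.e. `X·ddiag(XᵀXA) = XA`
(vanishing Riemannian gradient on the product of spheres). -/
def IsCritical {d : ℕ} {ι : Type*} [Fintype ι] [DecidableEq ι] (W : Matrix ι ι ℝ)
    (X : Matrix (Fin d) ι ℝ) (d1 : ℝ → ℝ) : Prop :=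
  X * Smat W X d1 = 0

/-- The Riemannian Hessian quadratic form of `f` at `X` is negative semidefinite:
`−⟨ẊᵀẊ, S⟩ + (1/2)⟨(XᵀẊ + ẊᵀX)^{⊙2}, W ⊙ φ''(XᵀX)⟩ ≤ 0` for all tangent `Ẋ`. -/
def HessNegSemidef {d : ℕ} {ι : Type*} [Fintype ι] [DecidableEq ι] (W : Matrix ι ι ℝ)
    (X : Matrix (Fin d) ι ℝ) (d1 d2 : ℝ → ℝ) : Prop :=
  ∀ V : Matrix (Fin d) ι ℝ, (∀ j, (Xᵀ * V) j j = 0) →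
    -(frob (Vᵀ * V) (Smat W X d1))
      + (1 / 2) * frob ((Xᵀ * V + Vᵀ * X).map fun t => t ^ 2)
          (Matrix.hadamard W ((Xᵀ * X).map d2)) ≤ 0

/-- The graph with an edge `{i,j}` whenever `w_ij > 0` is connected. -/
def ConnectedW {ι : Type*} (W : Matrix ι ι ℝ) : Prop :=
  (SimpleGraph.fromRel fun i j => 0 < W i j).Connected

/-- `f(Y) = (1/2)⟨W, φ(YᵀY)⟩`. -/
def fval {d : ℕ} {ι : Type*} [Fintype ι] (W : Matrix ι ι ℝ) (φ : ℝ → ℝ)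
    (Y : Matrix (Fin d) ι ℝ) : ℝ :=
  (1 / 2) * frob W ((Yᵀ * Y).map φ)

/-- `h(t) = tφ'(t) − (1−t²)φ''(t)`. -/
def hfun (d1 d2 : ℝ → ℝ) (t : ℝ) : ℝ := t * d1 t - (1 - t ^ 2) * d2 t

/-- The matrix `M` with `m_ij = w_ij · h(x_iᵀx_j)`. -/
def Mmat {d : ℕ} {ι : Type*} [Fintype ι] (W : Matrix ι ι ℝ) (X : Matrix (Fin d) ι ℝ)
    (d1 d2 : ℝ → ℝ) : Matrix ι ι ℝ :=
  Matrix.of fun i j => W i j * hfun d1 d2 ((Xᵀ * X) i j)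

/-- The kernel of `L` is exactly `span(1)`. -/
def KernelIsConst {ι : Type*} [Fintype ι] [DecidableEq ι] (L : Matrix ι ι ℝ) : Prop :=
  ∀ α : ι → ℝ, L.mulVec α = 0 ↔ ∃ c : ℝ, ∀ k, α k = c

/-- The regular `n`-gon configuration on the unit circle. -/
def ngon (n : ℕ) : Matrix (Fin 2) (Fin n) ℝ :=
  Matrix.of fun a j =>
    if a = 0 then Real.cos (2 * Real.pi * (j : ℝ) / (n : ℝ))
    else Real.sin (2 * Real.pi * (j : ℝ) / (n : ℝ))

/-- The log-sum-exp smoothing `φ_{ε,τ}(t) = ε·log(1 + e^{(t−τ)/ε})` of the ReLU. -/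
def philse (ε τ : ℝ) : ℝ → ℝ := fun t => ε * Real.log (1 + Real.exp ((t - τ) / ε))

/-!
Column `(i, t)` of the repeated configuration sees the gradient of column `i` of `X` divided by
`q_i`, so criticality transfers. For the Laplacian, split `v` on each block `i` into its mean
`ᾱ_i` and the deviations from it:
`vᵀ L(M̃) v = ᾱᵀ L(M) ᾱ + ∑_i r_i ∑_t (v_{it} - ᾱ_i)²` with `r_i = ∑_j q_j h(x_iᵀx_j)`.
The diagonal of the positive semidefinite `L(M)` gives `q_i r_i ≥ q_i² h(1) = q_i² φ'(1) > 0`,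
so both terms are nonnegative, and a kernel vector is constant on each block with block values in
`ker L(M) = span(1)`.
-/

section Laplacian

variable {ι : Type*} [Fintype ι] [DecidableEq ι]

lemma dotProduct_lap_mulVec (M : Matrix ι ι ℝ) (v : ι → ℝ) :
    v ⬝ᵥ lap M *ᵥ v = ∑ i, ∑ j, M i j * (v i * v i - v i * v j) := by
  rw [lap, sub_mulVec, dotProduct_sub]
  simp only [dotProduct, mulVec_diagonal]
  simp only [mulVec, dotProduct, Finset.mul_sum, Finset.sum_mul, mul_sub, Finset.sum_sub_distrib]
  congr 1 <;> exact Finset.sum_congr rfl fun i _ => Finset.sum_congr rfl fun j _ => by ring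

lemma lap_mulVec_const (M : Matrix ι ι ℝ) (c : ℝ) : lap M *ᵥ (fun _ => c) = 0 := by
  funext i
  rw [lap, sub_mulVec, Pi.sub_apply, mulVec_diagonal]
  simp [mulVec, dotProduct, Finset.sum_mul]

lemma isHermitian_lap {M : Matrix ι ι ℝ} (hM : M.IsSymm) : (lap M).IsHermitian := by
  simp only [IsHermitian, conjTranspose_eq_transpose_of_trivial, lap, transpose_sub,
    diagonal_transpose, hM.eq]

lemma diag_le_sum_of_posSemidef_lap {M : Matrix ι ι ℝ} (h : (lap M).PosSemidef) (i : ι) :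
    M i i ≤ ∑ j, M i j := by
  simpa only [lap, Matrix.sub_apply, diagonal_apply_eq, sub_nonneg] using h.diag_nonneg (i := i)

end Laplacian

section Repetition

variable {ι : Type*} {q : ι → ℕ}

def fiberMean (v : (Σ i, Fin (q i)) → ℝ) (i : ι) : ℝ := (∑ t, v ⟨i, t⟩) / q i

lemma sum_sq_sub_fiberMean (hq : ∀ i, 0 < q i) (v : (Σ i, Fin (q i)) → ℝ) (i : ι) :
    ∑ t, (v ⟨i, t⟩ - fiberMean v i) ^ 2 = ∑ t, v ⟨i, t⟩ ^ 2 - (∑ t, v ⟨i, t⟩) ^ 2 / q i := by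
  have hqi : (q i : ℝ) ≠ 0 := by have := hq i; positivity
  simp only [fiberMean, sub_sq, Finset.sum_add_distrib, Finset.sum_sub_distrib, ← Finset.sum_mul,
    ← Finset.mul_sum, Finset.sum_const, Finset.card_univ, Fintype.card_fin, nsmul_eq_mul]
  field_simp
  ring

variable [Fintype ι] [DecidableEq ι]

lemma dotProduct_lap_submatrix_fst_mulVec (hq : ∀ i, 0 < q i) (N : Matrix ι ι ℝ)
    (v : (Σ i, Fin (q i)) → ℝ) :
    v ⬝ᵥ lap (N.submatrix Sigma.fst Sigma.fst) *ᵥ v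
      = fiberMean v ⬝ᵥ lap (of (fun i j => (q i : ℝ) * q j) ⊙ N) *ᵥ fiberMean v
        + ∑ i, (∑ j, q j * N i j) * ∑ t, (v ⟨i, t⟩ - fiberMean v i) ^ 2 := by
  simp only [dotProduct_lap_mulVec, sum_sq_sub_fiberMean hq, Fintype.sum_sigma, submatrix_apply,
    hadamard_apply, of_apply, Finset.sum_mul, ← Finset.sum_add_distrib]
  refine Finset.sum_congr rfl fun i _ => ?_
  rw [Finset.sum_comm]
  refine Finset.sum_congr rfl fun j _ => ?_
  have hqi : (q i : ℝ) ≠ 0 := by have := hq i; positivity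
  have hqj : (q j : ℝ) ≠ 0 := by have := hq j; positivity
  simp only [fiberMean, mul_sub, Finset.sum_sub_distrib, ← Finset.mul_sum, ← Finset.sum_mul,
    Finset.sum_const, Finset.card_univ, Fintype.card_fin, nsmul_eq_mul, ← pow_two]
  field_simp
  ring

lemma sum_mul_pos_of_posSemidef_lap {N : Matrix ι ι ℝ} (hq : ∀ i, 0 < q i)
    (hdiag : ∀ i, 0 < N i i) (h : (lap (of (fun i j => (q i : ℝ) * q j) ⊙ N)).PosSemidef)
    (i : ι) : 0 < ∑ j, q j * N i j := by
  have hqi : (0 : ℝ) < q i := by exact_mod_cast hq i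
  have hle : q i * (q i * N i i) ≤ q i * ∑ j, q j * N i j := by
    simpa only [hadamard_apply, of_apply, Finset.mul_sum, mul_assoc]
      using diag_le_sum_of_posSemidef_lap h i
  exact (mul_pos hqi (hdiag i)).trans_le (le_of_mul_le_mul_left hle hqi)

lemma posSemidef_lap_submatrix_fst {N : Matrix ι ι ℝ} (hq : ∀ i, 0 < q i) (hN : N.IsSymm)
    (hrow : ∀ i, 0 < ∑ j, q j * N i j)
    (h : (lap (of (fun i j => (q i : ℝ) * q j) ⊙ N)).PosSemidef) :
    (lap (N.submatrix (Sigma.fst : (Σ i, Fin (q i)) → ι) Sigma.fst)).PosSemidef := by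
  refine .of_dotProduct_mulVec_nonneg (isHermitian_lap (hN.submatrix _)) fun v => ?_
  rw [star_trivial, dotProduct_lap_submatrix_fst_mulVec hq]
  have hmean := h.dotProduct_mulVec_nonneg (fiberMean v)
  rw [star_trivial] at hmean
  have hdev : 0 ≤ ∑ i, (∑ j, q j * N i j) * ∑ t, (v ⟨i, t⟩ - fiberMean v i) ^ 2 :=
    Finset.sum_nonneg fun i _ => mul_nonneg (hrow i).le (Finset.sum_nonneg fun _ _ => sq_nonneg _)
  linarith

lemma kernelIsConst_lap_submatrix_fst {N : Matrix ι ι ℝ} (hq : ∀ i, 0 < q i)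
    (hrow : ∀ i, 0 < ∑ j, q j * N i j)
    (h : (lap (of (fun i j => (q i : ℝ) * q j) ⊙ N)).PosSemidef)
    (hker : KernelIsConst (lap (of (fun i j => (q i : ℝ) * q j) ⊙ N))) :
    KernelIsConst (lap (N.submatrix (Sigma.fst : (Σ i, Fin (q i)) → ι) Sigma.fst)) := by
  refine fun v => ⟨fun hv => ?_, fun ⟨c, hc⟩ => funext hc ▸ lap_mulVec_const _ c⟩
  have hzero := dotProduct_lap_submatrix_fst_mulVec hq N v
  rw [hv, dotProduct_zero] at hzero
  have hmean := h.dotProduct_mulVec_nonneg (fiberMean v)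
  rw [star_trivial] at hmean
  have hdev : ∀ i ∈ Finset.univ, 0 ≤ (∑ j, q j * N i j) * ∑ t, (v ⟨i, t⟩ - fiberMean v i) ^ 2 :=
    fun i _ => mul_nonneg (hrow i).le (Finset.sum_nonneg fun _ _ => sq_nonneg _)
  have hdev_sum := Finset.sum_nonneg hdev
  have hdev0 := (Finset.sum_eq_zero_iff_of_nonneg hdev).mp (by linarith)
  obtain ⟨c, hc⟩ := (hker _).mp <| (h.dotProduct_mulVec_zero_iff _).mp <| by
    rw [star_trivial]; linarith
  refine ⟨c, fun ⟨i, t⟩ => ?_⟩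
  have hsq := (Finset.sum_eq_zero_iff_of_nonneg fun _ _ => sq_nonneg _).mp
    ((mul_eq_zero.mp (hdev0 i (Finset.mem_univ i))).resolve_left (hrow i).ne')
    t (Finset.mem_univ t)
  rwa [← hc i, ← sub_eq_zero, ← sq_eq_zero_iff]

end Repetition

section Gram

variable {d : ℕ} {ι κ : Type*}

lemma isSymm_transpose_mul (X : Matrix (Fin d) ι ℝ) : (Xᵀ * X).IsSymm := by
  rw [IsSymm, transpose_mul, transpose_transpose]

lemma transpose_mul_self_apply_self_of_unitCols [Fintype ι] {X : Matrix (Fin d) ι ℝ}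
    (hX : unitCols X) (i : ι) : (Xᵀ * X) i i = 1 := by
  simpa only [mul_apply, transpose_apply, ← sq] using hX i

lemma transpose_submatrix_mul_submatrix (X : Matrix (Fin d) ι ℝ) (f : κ → ι) :
    (X.submatrix id f)ᵀ * X.submatrix id f = (Xᵀ * X).submatrix f f := by
  rw [transpose_submatrix, submatrix_mul _ _ _ _ _ Function.bijective_id]

lemma Mmat_ones_submatrix [Fintype κ] (X : Matrix (Fin d) ι ℝ) (f : κ → ι) (d1 d2 : ℝ → ℝ) :
    Mmat (of fun _ _ => 1) (X.submatrix id f) d1 d2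
      = ((Xᵀ * X).map (hfun d1 d2)).submatrix f f := by
  ext k l
  simp only [Mmat, of_apply, transpose_submatrix_mul_submatrix, one_mul, submatrix_apply,
    map_apply]

end Gram

section Criticality

variable {d : ℕ} {ι : Type*} [Fintype ι] [DecidableEq ι]

lemma mul_Smat_apply (W : Matrix ι ι ℝ) (X : Matrix (Fin d) ι ℝ) (d1 : ℝ → ℝ) (a : Fin d)
    (l : ι) :
    (X * Smat W X d1) a l
      = X a l * ∑ k, (Xᵀ * X) l k * (W k l * d1 ((Xᵀ * X) k l))
        - ∑ k, X a k * (W k l * d1 ((Xᵀ * X) k l)) := by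
  rw [Smat, ddiag, Matrix.mul_sub, Matrix.sub_apply, mul_diagonal, mul_apply, mul_apply]
  simp only [Amat, hadamard_apply, map_apply, mul_comm (X a l)]

variable {q : ι → ℕ}

lemma mul_Smat_ones_submatrix_fst (X : Matrix (Fin d) ι ℝ) (d1 : ℝ → ℝ) (a : Fin d)
    (l : Σ i, Fin (q i)) :
    (q l.1 : ℝ) * (X.submatrix id (Sigma.fst : (Σ i, Fin (q i)) → ι)
        * Smat (of fun _ _ => 1) (X.submatrix id (Sigma.fst : (Σ i, Fin (q i)) → ι)) d1) a l
      = (X * Smat (of fun i j => (q i : ℝ) * q j) X d1) a l.1 := by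
  simp only [mul_Smat_apply, transpose_submatrix_mul_submatrix, submatrix_apply, of_apply,
    one_mul, id, Fintype.sum_sigma, Finset.sum_const, Finset.card_univ, Fintype.card_fin,
    nsmul_eq_mul, mul_sub, Finset.mul_sum]
  congr 1 <;> exact Finset.sum_congr rfl fun k _ => by ring

lemma isCritical_ones_submatrix_fst {X : Matrix (Fin d) ι ℝ} {d1 : ℝ → ℝ} (hq : ∀ i, 0 < q i)
    (h : IsCritical (of fun i j => (q i : ℝ) * q j) X d1) :
    IsCritical (of fun _ _ => (1 : ℝ)) (X.submatrix id (Sigma.fst : (Σ i, Fin (q i)) → ι)) d1 := by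
  ext a l
  have hql : (q l.1 : ℝ) ≠ 0 := by have := hq l.1; positivity
  have hscaled := mul_Smat_ones_submatrix_fst X d1 a l
  rw [h, Matrix.zero_apply, mul_eq_zero] at hscaled
  exact hscaled.resolve_left hql

end Criticality

theorem repeating_points_general
    {m : ℕ}
    (d1 d2 : ℝ → ℝ)
    (hphi1 : 0 < d1 1)
    (q : Fin m → ℕ) (hq : ∀ i, 1 ≤ q i)
    (X : Matrix (Fin 2) (Fin m) ℝ) (hX : unitCols X)
    (hcrit : IsCritical (Matrix.of fun i j => (q i : ℝ) * (q j : ℝ)) X d1)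
    (hpsd : (lap (Mmat (Matrix.of fun i j => (q i : ℝ) * (q j : ℝ)) X d1 d2)).PosSemidef)
    (hker : KernelIsConst
      (lap (Mmat (Matrix.of fun i j => (q i : ℝ) * (q j : ℝ)) X d1 d2))) :
    IsCritical (Matrix.of fun _ _ => (1 : ℝ))
      (Matrix.of fun a (k : (i : Fin m) × Fin (q i)) => X a k.1) d1 ∧
    (lap (Mmat (Matrix.of fun _ _ => (1 : ℝ))
      (Matrix.of fun a (k : (i : Fin m) × Fin (q i)) => X a k.1) d1 d2)).PosSemidef ∧
    KernelIsConst (lap (Mmat (Matrix.of fun _ _ => (1 : ℝ))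
      (Matrix.of fun a (k : (i : Fin m) × Fin (q i)) => X a k.1) d1 d2)) := by
  have hdiag : ∀ i, 0 < (Xᵀ * X).map (hfun d1 d2) i i := fun i => by
    rwa [map_apply, transpose_mul_self_apply_self_of_unitCols hX, hfun, one_pow, sub_self,
      zero_mul, sub_zero, one_mul]
  have hrow := sum_mul_pos_of_posSemidef_lap hq hdiag hpsd
  have hM := Mmat_ones_submatrix X (Sigma.fst : (Σ i, Fin (q i)) → Fin m) d1 d2
  refine ⟨isCritical_ones_submatrix_fst hq hcrit, ?_, ?_⟩
  · exact hM ▸ posSemidef_lap_submatrix_fst hq ((isSymm_transpose_mul X).map _) hrow hpsd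
  · exact hM ▸ kernelIsConst_lap_submatrix_fst hq hrow hpsd hker

/-- Lemma 5, trading weights for repetitions: if `X` is a strict spurious
critical point of `f_m` with weights `qqᵀ`, then repeating each `x_i` exactly `q_i` times
gives a strict spurious critical point of `f_n` with unit weights. -/
theorem repeating_points
    {m : ℕ} (hm : 1 ≤ m)
    (φ d1 d2 : ℝ → ℝ)
    (hder1 : ∀ t ∈ Set.Icc (-1 : ℝ) 1, HasDerivAt φ (d1 t) t)
    (hder2 : ∀ t ∈ Set.Icc (-1 : ℝ) 1, HasDerivAt d1 (d2 t) t)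
    (hphi1 : 0 < d1 1)
    (q : Fin m → ℕ) (hq : ∀ i, 1 ≤ q i)
    (X : Matrix (Fin 2) (Fin m) ℝ) (hX : unitCols X)
    (hcrit : IsCritical (Matrix.of fun i j => (q i : ℝ) * (q j : ℝ)) X d1)
    (hpsd : (lap (Mmat (Matrix.of fun i j => (q i : ℝ) * (q j : ℝ)) X d1 d2)).PosSemidef)
    (hker : KernelIsConst
      (lap (Mmat (Matrix.of fun i j => (q i : ℝ) * (q j : ℝ)) X d1 d2))) :
    IsCritical (Matrix.of fun _ _ => (1 : ℝ))
      (Matrix.of fun a (k : (i : Fin m) × Fin (q i)) => X a k.1) d1 ∧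
    (lap (Mmat (Matrix.of fun _ _ => (1 : ℝ))
      (Matrix.of fun a (k : (i : Fin m) × Fin (q i)) => X a k.1) d1 d2)).PosSemidef ∧
    KernelIsConst (lap (Mmat (Matrix.of fun _ _ => (1 : ℝ))
      (Matrix.of fun a (k : (i : Fin m) × Fin (q i)) => X a k.1) d1 d2)) :=
  repeating_points_general d1 d2 hphi1 q hq X hX hcrit hpsd hker
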